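/- For every positive integer m, let γ*_m be the unique positive root of g(m, w) = Γ(m+1, w) − (m+1)Γ(m, w). Then (γ*_m)^{m+1} · e^{−γ*_m} < m!; equivalently, γ*_m · Γ(m, γ*_m) < m!. -/

import Mathlib

open MeasureTheory

/-- The upper incomplete Gamma function `Γ(m, w) = ∫_w^∞ t^{m−1} e^{−t} dt`. -/
noncomputable def iGamma (m : ℕ) (w : ℝ) : ℝ := ∫ t in Set.Ioi w, t ^ (m - 1) * Real.exp (-t)

/-- `g(m, w) = Γ(m+1, w) − (m+1) Γ(m, w)`. -/
noncomputable def gFun (m : ℕ) (w : ℝ) : ℝ := iGamma (m + 1) w - (m + 1) * iGamma m w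

/-!
Integration by parts gives `Γ(m+1, w) = w^m e^{-w} + m Γ(m, w)`, so `g(m, w) = w^m e^{-w} - Γ(m, w)`
and at the root `γ` the two terms `γ^{m+1} e^{-γ}` and `γ Γ(m, γ)` coincide. Since `t ≥ γ` on the
range of integration, `γ Γ(m, γ) ≤ Γ(m+1, γ)`, and `Γ(m+1, ·)` decreases strictly on `[0, ∞)`
from `Γ(m+1, 0) = m!`.
-/

open Real Set Filter Topology
open scoped Nat

theorem integrableOn_pow_mul_exp_neg_Ioi (k : ℕ) (a : ℝ) :
    IntegrableOn (fun t : ℝ => t ^ k * exp (-t)) (Ioi a) := by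
  refine integrable_of_isBigO_exp_neg one_half_pos (by fun_prop) ?_
  refine ((isLittleO_pow_exp_pos_mul_atTop k one_half_pos).isBigO.mul
    (Asymptotics.isBigO_refl (fun t : ℝ => exp (-t)) atTop)).congr_right fun t => ?_
  rw [← exp_add]
  ring_nf

theorem iGamma_succ_eq_integral (m : ℕ) (w : ℝ) :
    iGamma (m + 1) w = ∫ t in Ioi w, t ^ m * exp (-t) := by
  simp only [iGamma, Nat.add_sub_cancel]

theorem iGamma_succ (m : ℕ) (w : ℝ) :
    iGamma (m + 1) w = w ^ m * exp (-w) + m * iGamma m w := by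
  have hderiv : ∀ t ∈ Ici w, HasDerivAt (fun t => -(t ^ m * exp (-t)))
      (t ^ m * exp (-t) - m * (t ^ (m - 1) * exp (-t))) t := fun t _ => by
    exact (((hasDerivAt_pow m t).mul (hasDerivAt_neg t).exp).neg).congr_deriv (by ring)
  have hlim : Tendsto (fun t : ℝ => -(t ^ m * exp (-t))) atTop (𝓝 0) := by
    simpa using (tendsto_pow_mul_exp_neg_atTop_nhds_zero m).neg
  have hm := integrableOn_pow_mul_exp_neg_Ioi m w
  have hm' := (integrableOn_pow_mul_exp_neg_Ioi (m - 1) w).const_mul (m : ℝ)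
  have hparts := integral_Ioi_of_hasDerivAt_of_tendsto' hderiv (hm.sub hm') hlim
  rw [integral_sub hm hm', integral_const_mul] at hparts
  rw [iGamma_succ_eq_integral, iGamma]
  linarith

theorem gFun_eq_sub (m : ℕ) (w : ℝ) : gFun m w = w ^ m * exp (-w) - iGamma m w := by
  rw [gFun, iGamma_succ]
  ring

theorem iGamma_eq_of_gFun_eq_zero {m : ℕ} {w : ℝ} (h : gFun m w = 0) :
    iGamma m w = w ^ m * exp (-w) :=
  (sub_eq_zero.mp ((gFun_eq_sub m w).symm.trans h)).symm

theorem iGamma_lt_iGamma (m : ℕ) {a b : ℝ} (ha : 0 ≤ a) (hab : a < b) :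
    iGamma m b < iGamma m a := by
  rw [← sub_pos, iGamma, iGamma,
    intervalIntegral.integral_Ioi_sub_Ioi (integrableOn_pow_mul_exp_neg_Ioi _ a) hab.le]
  refine intervalIntegral.intervalIntegral_pos_of_pos_on
    (Continuous.intervalIntegrable (by fun_prop) _ _) (fun t ht => ?_) hab
  have : 0 < t := ha.trans_lt ht.1
  positivity

theorem iGamma_succ_zero (m : ℕ) : iGamma (m + 1) 0 = m ! := by
  rw [iGamma_succ_eq_integral, ← Gamma_nat_eq_factorial, Gamma_eq_integral (by positivity)]
  refine setIntegral_congr_fun measurableSet_Ioi fun t _ => ?_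
  rw [add_sub_cancel_right, rpow_natCast, mul_comm]

theorem mul_iGamma_le_iGamma_succ {m : ℕ} (hm : 1 ≤ m) {w : ℝ} (hw : 0 ≤ w) :
    w * iGamma m w ≤ iGamma (m + 1) w := by
  rw [iGamma, iGamma_succ_eq_integral, ← integral_const_mul]
  refine setIntegral_mono_on ((integrableOn_pow_mul_exp_neg_Ioi _ w).const_mul w)
    (integrableOn_pow_mul_exp_neg_Ioi m w) measurableSet_Ioi fun t (ht : w < t) => ?_
  have : 0 ≤ t := hw.trans ht.le
  calc w * (t ^ (m - 1) * exp (-t)) ≤ t * (t ^ (m - 1) * exp (-t)) := by gcongr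
    _ = t ^ m * exp (-t) := by rw [← mul_assoc, ← pow_succ', Nat.sub_add_cancel hm]

/-- For every positive integer `m`, if `γ*_m` is the (unique) positive root of `g(m, ·)`,
then `(γ*_m)^{m+1} e^{−γ*_m} < m!`; equivalently, `γ*_m Γ(m, γ*_m) < m!`. -/
theorem G_lt_factorial (m : ℕ) (hm : 1 ≤ m)
    (γ : ℝ) (hγ_pos : 0 < γ) (hγ_root : gFun m γ = 0) :
    γ ^ (m + 1) * Real.exp (-γ) < (Nat.factorial m : ℝ) ∧
    γ * iGamma m γ < (Nat.factorial m : ℝ) := by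
  have key : γ * iGamma m γ < m ! :=
    calc γ * iGamma m γ ≤ iGamma (m + 1) γ := mul_iGamma_le_iGamma_succ hm hγ_pos.le
      _ < iGamma (m + 1) 0 := iGamma_lt_iGamma (m + 1) le_rfl hγ_pos
      _ = m ! := iGamma_succ_zero m
  refine ⟨?_, key⟩
  rwa [pow_succ', mul_assoc, ← iGamma_eq_of_gFun_eq_zero hγ_root]
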